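/- arXiv:0805.1463 — 2 statements merged into one kernel-verified Lean document; each statement's English description precedes it below -/
import Mathlib

section
/- Let n ≥ 1 and let f : {0,1}^n → ℝ be nonnegative and satisfy the parity-obliviousness condition: for every s ∈ Par, ∑_{x : x·s=0} f(x) = ∑_{x : x·s=1} f(x). Let f̂(r) = 2^{−n} ∑_{x} (−1)^{x·r} f(x) denote the Fourier coefficients, let 0⃗ denote the all-zeros string, and let e_i denote the string with a single 1 in position i. Then f̂(0⃗) − ∑_{i=1}^{n} |f̂(e_i)| ≥ 0. -/
/-- The inner product modulo 2 of two n-bit strings: x·s = ⊕ᵢ xᵢsᵢ. -/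
def dotZ2 {n : ℕ} (x s : Fin n → ZMod 2) : ZMod 2 := ∑ i, x i * s i

/-- The Hamming weight of an n-bit string. -/
def hamWt {n : ℕ} (s : Fin n → ZMod 2) : ℕ :=
  (Finset.univ.filter (fun i => s i = 1)).card

/-- The n-bit string with a single 1 in position i. -/
def unitStr {n : ℕ} (i : Fin n) : Fin n → ZMod 2 := fun j => if j = i then 1 else 0

noncomputable def chi (a : ZMod 2) : ℝ := (-1) ^ a.val

lemma zmod2_cases (a : ZMod 2) : a = 0 ∨ a = 1 := by revert a; decide

lemma chi_zero : chi 0 = 1 := by simp [chi]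

lemma chi_add (a b : ZMod 2) : chi (a + b) = chi a * chi b := by
  rcases zmod2_cases a with h | h <;> rcases zmod2_cases b with h' | h' <;>
    subst h <;> subst h' <;>
    norm_num [chi, show ((2:ZMod 2)).val = 0 from rfl, show ((1:ZMod 2)).val = 1 from rfl]

lemma dot_add_left {n : ℕ} (x y r : Fin n → ZMod 2) :
    dotZ2 (x + y) r = dotZ2 x r + dotZ2 y r := by
  simp [dotZ2, add_mul, Finset.sum_add_distrib]

lemma dot_add_right {n : ℕ} (x y r : Fin n → ZMod 2) :
    dotZ2 x (y + r) = dotZ2 x y + dotZ2 x r := by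
  simp [dotZ2, mul_add, Finset.sum_add_distrib]

lemma dot_unit {n : ℕ} (x : Fin n → ZMod 2) (i : Fin n) :
    dotZ2 x (unitStr i) = x i := by
  simp [dotZ2, unitStr, mul_ite]

lemma charSum {n : ℕ} (z : Fin n → ZMod 2) :
    ∑ r : Fin n → ZMod 2, chi (dotZ2 z r) = if z = 0 then (2 : ℝ) ^ n else 0 := by
  by_cases hz : z = 0
  · subst hz
    have : ∀ r : Fin n → ZMod 2, dotZ2 0 r = 0 := by intro r; simp [dotZ2]
    simp only [this, chi_zero, if_pos rfl, Finset.sum_const, Finset.card_univ, nsmul_eq_mul,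
      mul_one]
    rw [Fintype.card_pi]
    simp
  · simp only [hz, if_false]
    obtain ⟨i, hi⟩ : ∃ i, z i = 1 := by
      by_contra h
      push_neg at h
      apply hz
      funext j
      rcases zmod2_cases (z j) with h' | h'
      · exact h'
      · exact absurd h' (h j)
    have key : ∑ r : Fin n → ZMod 2, chi (dotZ2 z r)
        = ∑ r : Fin n → ZMod 2, chi (dotZ2 z (r + unitStr i)) :=
      Fintype.sum_equiv (Equiv.addRight (unitStr i)) _ _ (fun r => by
        have hu : unitStr i + unitStr i = 0 := by
          funext j; simp only [unitStr, Pi.add_apply, Pi.zero_apply]; split <;> decide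
        simp [add_assoc, hu])
    have h2 : ∀ r : Fin n → ZMod 2, chi (dotZ2 z (r + unitStr i)) = - chi (dotZ2 z r) := by
      intro r
      rw [show r + unitStr i = unitStr i + r from add_comm _ _, dot_add_right, chi_add, dot_unit,
        hi]
      norm_num [chi, show ((1:ZMod 2)).val = 1 from rfl]
    simp only [h2, Finset.sum_neg_distrib] at key
    linarith

lemma zmod2_add_eq_zero : ∀ a b : ZMod 2, a + b = 0 ↔ b = a := by decide

lemma inversion {n : ℕ} (f fhat : (Fin n → ZMod 2) → ℝ)
    (hfhat : ∀ r, fhat r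
      = ((2 : ℝ) ^ n)⁻¹ * ∑ x : Fin n → ZMod 2, (-1) ^ (dotZ2 x r).val * f x)
    (y : Fin n → ZMod 2) :
    ∑ r : Fin n → ZMod 2, chi (dotZ2 y r) * fhat r = f y := by
  have h1 : ∀ r : Fin n → ZMod 2, chi (dotZ2 y r) * fhat r
      = ((2 : ℝ) ^ n)⁻¹ * ∑ x : Fin n → ZMod 2, chi (dotZ2 (y + x) r) * f x := by
    intro r
    rw [hfhat r, mul_left_comm]
    congr 1
    rw [Finset.mul_sum]
    refine Finset.sum_congr rfl fun x _ => ?_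
    have h := chi_add (dotZ2 y r) (dotZ2 x r)
    rw [dot_add_left, h]
    simp only [chi]
    ring
  calc ∑ r : Fin n → ZMod 2, chi (dotZ2 y r) * fhat r
      = ((2 : ℝ) ^ n)⁻¹ * ∑ r : Fin n → ZMod 2, ∑ x : Fin n → ZMod 2,
          chi (dotZ2 (y + x) r) * f x := by
        rw [Finset.mul_sum]; exact Finset.sum_congr rfl fun r _ => h1 r
    _ = ((2 : ℝ) ^ n)⁻¹ * ∑ x : Fin n → ZMod 2, (∑ r : Fin n → ZMod 2,
          chi (dotZ2 (y + x) r)) * f x := by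
        rw [Finset.sum_comm]
        congr 1
        exact Finset.sum_congr rfl fun x _ => (Finset.sum_mul _ _ _).symm
    _ = ((2 : ℝ) ^ n)⁻¹ * ∑ x : Fin n → ZMod 2,
          (if x = y then (2 : ℝ) ^ n else 0) * f x := by
        congr 1
        refine Finset.sum_congr rfl fun x _ => ?_
        rw [charSum]
        have hiff : y + x = 0 ↔ x = y := by
          constructor
          · intro h
            funext j
            have hj := congrFun h j
            simp only [Pi.add_apply, Pi.zero_apply] at hj
            exact (zmod2_add_eq_zero _ _).mp hj
          · rintro rfl
            funext j
            simp only [Pi.add_apply, Pi.zero_apply]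
            exact (zmod2_add_eq_zero _ _).mpr rfl
        rw [if_congr hiff rfl rfl]
    _ = f y := by
        simp only [ite_mul, zero_mul, Finset.sum_ite_eq', Finset.mem_univ, if_pos]
        rw [inv_mul_cancel_left₀ (by positivity)]

lemma hamWt_eq_zero {n : ℕ} {s : Fin n → ZMod 2} (h : hamWt s = 0) : s = 0 := by
  rw [hamWt, Finset.card_eq_zero] at h
  funext j
  rcases zmod2_cases (s j) with h' | h'
  · exact h'
  · have hj : j ∈ Finset.univ.filter (fun i => s i = 1) := by simp [h']
    rw [h] at hj
    simp at hj

lemma hamWt_eq_one {n : ℕ} {s : Fin n → ZMod 2} (h : hamWt s = 1) :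
    ∃ i, s = unitStr i := by
  rw [hamWt, Finset.card_eq_one] at h
  obtain ⟨a, ha⟩ := h
  refine ⟨a, funext fun j => ?_⟩
  have hmem : ∀ j : Fin n, (s j = 1) ↔ j = a := by
    intro j
    have := Finset.ext_iff.mp ha j
    simpa using this
  by_cases hj : j = a
  · subst hj
    simp [unitStr, (hmem j).mpr rfl]
  · rcases zmod2_cases (s j) with h' | h'
    · simp [unitStr, hj, h']
    · exact absurd ((hmem j).mp h') hj

lemma zmod2_ne_zero_iff (a : ZMod 2) : ¬ a = 0 ↔ a = 1 := by
  rcases zmod2_cases a with h | h <;> simp [h]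

/-- If f : {0,1}ⁿ → ℝ is nonnegative and parity-oblivious (for every s of Hamming
weight ≥ 2, ∑_{x : x·s=0} f(x) = ∑_{x : x·s=1} f(x)), then its Fourier coefficients
f̂(r) = 2⁻ⁿ ∑ₓ (−1)^{x·r} f(x) satisfy f̂(0⃗) − ∑ᵢ |f̂(eᵢ)| ≥ 0. -/
theorem parity_oblivious_nonneg_fourier_bound
    (n : ℕ) (hn : 1 ≤ n) (f : (Fin n → ZMod 2) → ℝ)
    (hf_nonneg : ∀ x, 0 ≤ f x)
    (hPO : ∀ s : Fin n → ZMod 2, 2 ≤ hamWt s →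
      ∑ x ∈ Finset.univ.filter (fun x => dotZ2 x s = 0), f x
        = ∑ x ∈ Finset.univ.filter (fun x => dotZ2 x s = 1), f x)
    (fhat : (Fin n → ZMod 2) → ℝ)
    (hfhat : ∀ r, fhat r
      = ((2 : ℝ) ^ n)⁻¹ * ∑ x : Fin n → ZMod 2, (-1) ^ (dotZ2 x r).val * f x) :
    fhat (fun _ => 0) - ∑ i : Fin n, |fhat (unitStr i)| ≥ 0 := by
  -- Fourier coefficients of weight ≥ 2 vanish
  have hhigh : ∀ s : Fin n → ZMod 2, 2 ≤ hamWt s → fhat s = 0 := by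
    intro s hs
    rw [hfhat s]
    have hsplit : ∑ x : Fin n → ZMod 2, (-1 : ℝ) ^ (dotZ2 x s).val * f x
        = ∑ x ∈ Finset.univ.filter (fun x => dotZ2 x s = 0), (-1 : ℝ) ^ (dotZ2 x s).val * f x
          + ∑ x ∈ Finset.univ.filter (fun x => ¬ dotZ2 x s = 0),
              (-1 : ℝ) ^ (dotZ2 x s).val * f x :=
      (Finset.sum_filter_add_sum_filter_not _ _ _).symm
    rw [hsplit]
    have h0 : ∑ x ∈ Finset.univ.filter (fun x => dotZ2 x s = 0),
        (-1 : ℝ) ^ (dotZ2 x s).val * f x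
        = ∑ x ∈ Finset.univ.filter (fun x => dotZ2 x s = 0), f x := by
      refine Finset.sum_congr rfl fun x hx => ?_
      rw [(Finset.mem_filter.mp hx).2]
      norm_num
    have hfe : Finset.univ.filter (fun x : Fin n → ZMod 2 => ¬ dotZ2 x s = 0)
        = Finset.univ.filter (fun x => dotZ2 x s = 1) := by
      refine Finset.filter_congr fun x _ => ?_
      exact (zmod2_ne_zero_iff _)
    have h1 : ∑ x ∈ Finset.univ.filter (fun x : Fin n → ZMod 2 => ¬ dotZ2 x s = 0),
        (-1 : ℝ) ^ (dotZ2 x s).val * f x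
        = - ∑ x ∈ Finset.univ.filter (fun x => dotZ2 x s = 1), f x := by
      rw [hfe, ← Finset.sum_neg_distrib]
      refine Finset.sum_congr rfl fun x hx => ?_
      rw [(Finset.mem_filter.mp hx).2]
      norm_num [show ((1 : ZMod 2)).val = 1 from rfl]
    rw [h0, h1, hPO s hs]
    ring_nf
  -- the threshold point
  set y : Fin n → ZMod 2 := fun i => if 0 ≤ fhat (unitStr i) then 1 else 0 with hy
  have key := inversion f fhat hfhat y
  -- restrict the sum to weight ≤ 1 strings
  set T : Finset (Fin n → ZMod 2) := insert 0 (Finset.image unitStr Finset.univ) with hT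
  have hvanish : ∀ r ∈ Finset.univ, r ∉ T → chi (dotZ2 y r) * fhat r = 0 := by
    intro r _ hr
    have hr0 : r ≠ 0 := fun h => hr (by simp [hT, h])
    have hr1 : ∀ i, r ≠ unitStr i := by
      intro i h
      exact hr (by simp [hT]; right; exact ⟨i, h.symm⟩)
    have h2 : 2 ≤ hamWt r := by
      by_contra h
      push_neg at h
      interval_cases h' : hamWt r
      · exact hr0 (hamWt_eq_zero h')
      · obtain ⟨i, hi⟩ := hamWt_eq_one h'
        exact hr1 i hi
    rw [hhigh r h2, mul_zero]
  rw [← Finset.sum_subset (Finset.subset_univ T) hvanish] at key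
  have h0T : (0 : Fin n → ZMod 2) ∉ Finset.image unitStr Finset.univ := by
    simp only [Finset.mem_image, Finset.mem_univ, true_and, not_exists]
    intro i h
    have := congrFun h i
    simp [unitStr] at this
  have hinj : Set.InjOn unitStr ((Finset.univ : Finset (Fin n)) : Set (Fin n)) := by
    intro i _ j _ h
    by_contra hij
    have := congrFun h j
    simp [unitStr, Ne.symm hij] at this
  rw [hT, Finset.sum_insert h0T, Finset.sum_image hinj] at key
  have hdot0 : dotZ2 y 0 = 0 := by simp [dotZ2]
  have hterm : ∀ i : Fin n, chi (dotZ2 y (unitStr i)) * fhat (unitStr i)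
      = - |fhat (unitStr i)| := by
    intro i
    rw [dot_unit]
    by_cases hpos : 0 ≤ fhat (unitStr i)
    · have : y i = 1 := by simp [hy, hpos]
      rw [this, abs_of_nonneg hpos]
      norm_num [chi, show ((1 : ZMod 2)).val = 1 from rfl]
    · have : y i = 0 := by simp [hy, hpos]
      rw [this, abs_of_neg (lt_of_not_ge hpos), chi_zero, one_mul, neg_neg]
  rw [hdot0, chi_zero, one_mul] at key
  simp only [hterm] at key
  rw [Finset.sum_neg_distrib] at key
  have hzero_fun : (0 : Fin n → ZMod 2) = fun _ => 0 := rfl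
  rw [hzero_fun] at key
  have := hf_nonneg y
  linarith
end

section
/- For x = (x_1,x_2,x_3) ∈ {0,1}^3 define the 2×2 complex matrices ρ_x = (1/2)·(I + (1/√3)·((−1)^{x_1}·σ_x + (−1)^{x_2}·σ_y + (−1)^{x_3}·σ_z)), and for y ∈ {1,2,3}, b ∈ {0,1} define Π_{y,b} = (1/2)·(I + (−1)^b·σ_{(y)}), where σ_{(1)} = σ_x, σ_{(2)} = σ_y, σ_{(3)} = σ_z. Then each ρ_x is a density matrix (Hermitian, positive semidefinite, trace 1), each Π_{y,b} is an orthogonal projection with Π_{y,0} + Π_{y,1} = I, and for every x ∈ {0,1}^3 and y ∈ {1,2,3}, Tr(ρ_x · Π_{y,x_y}) = (1/2)·(1 + 1/√3) > 2/3. -/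
open Matrix ComplexOrder

/-- Pauli matrix σx. -/
def pauliX : Matrix (Fin 2) (Fin 2) ℂ := !![0, 1; 1, 0]

/-- Pauli matrix σy. -/
def pauliY : Matrix (Fin 2) (Fin 2) ℂ := !![0, -Complex.I; Complex.I, 0]

/-- Pauli matrix σz. -/
def pauliZ : Matrix (Fin 2) (Fin 2) ℂ := !![1, 0; 0, -1]

/-- The Pauli matrices indexed by an axis: σ₍₁₎ = σx, σ₍₂₎ = σy, σ₍₃₎ = σz. -/
def pauli : Fin 3 → Matrix (Fin 2) (Fin 2) ℂ := ![pauliX, pauliY, pauliZ]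

/-- Alice's states for quantum 3-bit parity-oblivious multiplexing:
ρ_x = (1/2)(I + (1/√3)((−1)^{x₁}σx + (−1)^{x₂}σy + (−1)^{x₃}σz)). -/
noncomputable def ρ₃ (x : Fin 3 → ZMod 2) : Matrix (Fin 2) (Fin 2) ℂ :=
  (1 / 2 : ℂ) •
    (1 + (1 / (Real.sqrt 3 : ℝ) : ℂ) •
      (((-1 : ℂ) ^ (x 0).val) • pauliX + ((-1 : ℂ) ^ (x 1).val) • pauliY
        + ((-1 : ℂ) ^ (x 2).val) • pauliZ))

/-- Bob's measurement effects: Pi_{y,b} = (1/2)(I + (−1)^b σ₍y₎). -/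
noncomputable def Proj₃ (y : Fin 3) (b : ZMod 2) : Matrix (Fin 2) (Fin 2) ℂ :=
  (1 / 2 : ℂ) • (1 + ((-1 : ℂ) ^ b.val) • pauli y)

/- ======= auxiliary lemmas ======= -/

lemma POM_sC_sq : (1 / ((Real.sqrt 3 : ℝ) : ℂ))^2 = 1/3 := by
  rw [div_pow, one_pow, ← Complex.ofReal_pow, Real.sq_sqrt (by norm_num : (0:ℝ) ≤ 3)]
  norm_num

lemma POM_sign_sq (n : ℕ) : ((-1 : ℂ)^n)^2 = 1 := by
  rw [← pow_mul, mul_comm, pow_mul]; norm_num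

lemma POM_conj_sign (n : ℕ) : (starRingEnd ℂ) ((-1 : ℂ)^n) = (-1 : ℂ)^n := by simp

lemma POM_proj_helper (M : Matrix (Fin 2) (Fin 2) ℂ) (hM : M * M = 1) :
    ((1/2 : ℂ) • (1 + M)) * ((1/2 : ℂ) • (1 + M)) = (1/2 : ℂ) • (1 + M) := by
  rw [smul_mul_assoc, mul_smul_comm, smul_smul]
  have h2 : (1 + M) * (1 + M) = (2 : ℂ) • (1 + M) := by
    have h : (1 + M) * (1 + M) = 1 + M + M + M * M := by noncomm_ring
    rw [h, hM, two_smul]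
    abel
  rw [h2, smul_smul]
  norm_num

lemma POM_u_sq (a b c : ℂ) (ha : a^2 = 1) (hb : b^2 = 1) (hc : c^2 = 1) :
    ((1 / ((Real.sqrt 3 : ℝ) : ℂ)) • (a • pauliX + b • pauliY + c • pauliZ)) *
    ((1 / ((Real.sqrt 3 : ℝ) : ℂ)) • (a • pauliX + b • pauliY + c • pauliZ)) = 1 := by
  set s : ℂ := 1 / ((Real.sqrt 3 : ℝ) : ℂ) with hs
  have hs2 : s^2 = 1/3 := POM_sC_sq
  ext i j
  fin_cases i <;> fin_cases j <;>
    simp [Matrix.mul_apply, Fin.sum_univ_two, pauliX, pauliY, pauliZ, Matrix.one_apply]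
  · linear_combination (c^2 + a^2 + b^2) * hs2 + (1/3)*ha + (1/3)*hb + (1/3)*hc
      - (s^2*b^2) * Complex.I_sq
  · ring
  · ring
  · linear_combination (c^2 + a^2 + b^2) * hs2 + (1/3)*ha + (1/3)*hb + (1/3)*hc
      - (s^2*b^2) * Complex.I_sq

lemma POM_pauli_sq (y : Fin 3) : pauli y * pauli y = 1 := by
  fin_cases y <;>
  · ext i j
    fin_cases i <;> fin_cases j <;>
      simp [pauli, pauliX, pauliY, pauliZ, Matrix.mul_apply, Fin.sum_univ_two,
        Matrix.one_apply, Complex.I_mul_I]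

lemma POM_rho_herm (x : Fin 3 → ZMod 2) : (ρ₃ x).IsHermitian := by
  have hs' : (starRingEnd ℂ) (1 / ((Real.sqrt 3 : ℝ) : ℂ)) = 1 / ((Real.sqrt 3 : ℝ) : ℂ) := by
    simp [Complex.conj_ofReal]
  show (ρ₃ x)ᴴ = ρ₃ x
  ext i j
  fin_cases i <;> fin_cases j <;>
    simp [ρ₃, Matrix.conjTranspose_apply, pauliX, pauliY, pauliZ, Matrix.one_apply,
      hs', POM_conj_sign, Complex.conj_ofReal] <;> ring

lemma POM_rho_idem (x : Fin 3 → ZMod 2) : ρ₃ x * ρ₃ x = ρ₃ x := by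
  unfold ρ₃
  rw [show (1/2 : ℂ) = (1/2 : ℂ) from rfl]
  exact POM_proj_helper _ (POM_u_sq _ _ _ (POM_sign_sq _) (POM_sign_sq _) (POM_sign_sq _))

/-- In the quantum protocol for 3-bit parity-oblivious multiplexing, each ρ_x is a
density matrix, each Pi_{y,b} is an orthogonal projection with
Pi_{y,0} + Pi_{y,1} = I, and every input is decoded correctly with probability
Tr(ρ_x Pi_{y,x_y}) = (1/2)(1 + 1/√3) > 2/3. -/
theorem quantum_three_bit_POM_protocol :
    (∀ x : Fin 3 → ZMod 2,
        (ρ₃ x).IsHermitian ∧ (ρ₃ x).PosSemidef ∧ (ρ₃ x).trace = 1) ∧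
    (∀ (y : Fin 3) (b : ZMod 2),
        (Proj₃ y b).IsHermitian ∧ Proj₃ y b * Proj₃ y b = Proj₃ y b) ∧
    (∀ y : Fin 3, Proj₃ y 0 + Proj₃ y 1 = 1) ∧
    (∀ (x : Fin 3 → ZMod 2) (y : Fin 3),
        (ρ₃ x * Proj₃ y (x y)).trace
          = (((1 / 2) * (1 + 1 / Real.sqrt 3) : ℝ) : ℂ)) ∧
    (2 / 3 : ℝ) < (1 / 2) * (1 + 1 / Real.sqrt 3) := by
  refine ⟨?_, ?_, ?_, ?_, ?_⟩
  · intro x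
    have hh := POM_rho_herm x
    refine ⟨hh, ?_, ?_⟩
    · have h : ρ₃ x = (ρ₃ x)ᴴ * ρ₃ x := by rw [hh, POM_rho_idem]
      rw [h]
      exact Matrix.posSemidef_conjTranspose_mul_self _
    · simp [ρ₃, Matrix.trace_fin_two, pauliX, pauliY, pauliZ, Matrix.one_apply]
  · intro y b
    constructor
    · show (Proj₃ y b)ᴴ = Proj₃ y b
      fin_cases y <;> fin_cases b <;>
      · ext i j
        fin_cases i <;> fin_cases j <;>
          simp [Proj₃, pauli, pauliX, pauliY, pauliZ, Matrix.conjTranspose_apply,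
            Matrix.one_apply, POM_conj_sign, show ((1:ZMod 2)).val = 1 from rfl] <;> ring
    · unfold Proj₃
      refine POM_proj_helper _ ?_
      rw [smul_mul_smul_comm, POM_pauli_sq, ← pow_two, POM_sign_sq]
      simp
  · intro y
    have hv0 : ((0 : ZMod 2)).val = 0 := rfl
    have hv1 : ((1 : ZMod 2)).val = 1 := rfl
    unfold Proj₃
    rw [hv0, hv1]
    simp only [pow_zero, pow_one]
    module
  · intro x y
    fin_cases y <;>
    · simp [ρ₃, Proj₃, pauli, Matrix.trace_fin_two, Matrix.mul_apply, Fin.sum_univ_two,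
        pauliX, pauliY, pauliZ, Matrix.one_apply]
      push_cast
      try linear_combination (1/(2*((Real.sqrt 3 : ℝ) : ℂ))) * POM_sign_sq (x 0).val
      try linear_combination (1/(2*((Real.sqrt 3 : ℝ) : ℂ))) * POM_sign_sq (x 1).val
          - ((-1:ℂ)^(x 1).val)^2/(2*((Real.sqrt 3 : ℝ) : ℂ)) * Complex.I_sq
      try linear_combination (1/(2*((Real.sqrt 3 : ℝ) : ℂ))) * POM_sign_sq (x 2).val
  · have hpos : 0 < Real.sqrt 3 := Real.sqrt_pos.mpr (by norm_num)
    have h3 : Real.sqrt 3 < 3 := by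
      nlinarith [Real.sq_sqrt (show (0:ℝ) ≤ 3 by norm_num)]
    have h13 : (1:ℝ)/3 < 1/Real.sqrt 3 := by
      rw [div_lt_div_iff₀ (by norm_num) hpos]; linarith
    linarith
end
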